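/- Let p = 2, n = 2m, q = 2^m, and let U = {x ∈ F_{2^n} : x·x^q = 1} be the unit circle. Let d = s(q − 1) + 1 with s a nonnegative integer and gcd(d, 2^n − 1) = 1. Then for every a ∈ F_{2^n}*, the Walsh transform W_d(a) = ∑_{x ∈ F_{2^n}} (−1)^{Tr(x^d + ax)} equals (N(a) − 1)·2^m, where N(a) is the number of x ∈ U satisfying x^{2s−1} + a x^s + a^q x^{s−1} + 1 = 0. -/

import Mathlib

noncomputable instance (p n : ℕ) [Fact p.Prime] : Fintype (GaloisField p n) :=
  Fintype.ofFinite _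

/-- `ω = exp(2πi/p)` raised to (the integer lift of) an element of `F_p`. -/
noncomputable def ew (p : ℕ) (x : ZMod p) : ℂ :=
  Complex.exp (2 * Real.pi * Complex.I / p) ^ x.val

/-- The absolute trace from `F_{p^n}` to `F_p`. -/
noncomputable def Tr (p n : ℕ) [Fact p.Prime] (x : GaloisField p n) : ZMod p :=
  Algebra.trace (ZMod p) (GaloisField p n) x

instance : Fact (Nat.Prime 2) := ⟨Nat.prime_two⟩

/-!
Every nonzero `x ∈ 𝔽_{q²}` factors uniquely as `x = λ u` with `λ ∈ 𝔽_q^*` and `u ∈ U`, because in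
characteristic 2 the subgroups of orders `q - 1` and `q + 1` of `𝔽_{q²}^*` meet trivially. Since
`λ ^ d = λ`, the Walsh sum becomes `1 + ∑_{u ∈ U} ∑_{λ ∈ 𝔽_q^*} (-1)^{Tr(λ c_u)}` with
`c_u = u ^ d + a u`. For `λ ∈ 𝔽_q` one has `Tr(λ c) = Tr_{𝔽_q}(λ (c + c^q))`, so the inner sum is
`q - 1` if `c_u ∈ 𝔽_q` and `-1` otherwise. Finally `c_u ∈ 𝔽_q` is the stated equation at `u²`,
and squaring permutes `U`.
-/

open Finset Polynomial

lemma AddChar.sum_eq_zero_of_add_mem {G R : Type*} [AddGroup G] [CommRing R] [IsDomain R]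
    (ψ : AddChar G R) {K : Finset G} {y : G} (hK : ∀ x ∈ K, x + y ∈ K) (hy : ψ y ≠ 1) :
    ∑ x ∈ K, ψ x = 0 := by
  have hmap : K.map (addRightEmbedding y) = K :=
    map_eq_of_subset fun _ hx => by
      obtain ⟨x, hxK, rfl⟩ := mem_map.mp hx
      exact hK x hxK
  have hshift : ∑ x ∈ K, ψ x = (∑ x ∈ K, ψ x) * ψ y := by
    conv_lhs => rw [← hmap, sum_map]
    simp only [addRightEmbedding_apply, AddChar.map_add_eq_mul, sum_mul]
  exact eq_zero_of_mul_eq_self_right hy hshift.symm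

lemma card_nthRootsFinset_one_of_dvd {F : Type*} [Field F] [Fintype F] {k : ℕ}
    (hk : k ∣ Fintype.card F - 1) : #(nthRootsFinset k (1 : F)) = k := by
  classical
  obtain ⟨g, hg⟩ := IsCyclic.exists_ofOrder_eq_natCard (α := Fˣ)
  rw [Nat.card_eq_fintype_card, Fintype.card_units] at hg
  have hζ : IsPrimitiveRoot (g ^ (orderOf g / k)) k := by
    have hg0 : orderOf g ≠ 0 := by rw [hg]; have := Fintype.one_lt_card (α := F); omega
    simpa only [orderOf_pow_orderOf_div hg0 (hg ▸ hk)] using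
      IsPrimitiveRoot.orderOf (g ^ (orderOf g / k))
  exact (IsPrimitiveRoot.coe_units_iff.mpr hζ).card_nthRootsFinset

lemma eq_one_of_pow_sub_one_of_pow_add_one {F : Type*} [Field F] [CharP F 2] {q : ℕ} {w : F}
    (h₁ : w ^ (q - 1) = 1) (h₂ : w ^ (q + 1) = 1) : w = 1 := by
  rcases Nat.eq_zero_or_pos q with rfl | hq
  · simpa using h₂
  have hsq : w ^ 2 = 1 ^ 2 := by
    rw [one_pow, ← h₂, show q + 1 = q - 1 + 2 by omega, pow_add, h₁, one_mul]
  exact frobenius_inj F 2 hsq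

section QuadraticExtension

variable {F : Type*} [Field F] [Fintype F] {q : ℕ}

lemma two_le_of_card_eq_sq (hF : Fintype.card F = q ^ 2) : 2 ≤ q := by
  have := Fintype.one_lt_card (α := F)
  rw [hF] at this
  by_contra! h
  interval_cases q <;> simp at this

lemma card_nthRootsFinset_sub_one (hF : Fintype.card F = q ^ 2) :
    #(nthRootsFinset (q - 1) (1 : F)) = q - 1 :=
  card_nthRootsFinset_one_of_dvd ⟨q + 1, by rw [hF]; simpa [mul_comm] using Nat.sq_sub_sq q 1⟩

lemma card_nthRootsFinset_add_one (hF : Fintype.card F = q ^ 2) :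
    #(nthRootsFinset (q + 1) (1 : F)) = q + 1 :=
  card_nthRootsFinset_one_of_dvd ⟨q - 1, by rw [hF]; simpa using Nat.sq_sub_sq q 1⟩

variable [DecidableEq F]

lemma filter_pow_eq_self_eq_insert_nthRootsFinset (hq : 2 ≤ q) :
    ({x : F | x ^ q = x} : Finset F) = insert 0 (nthRootsFinset (q - 1) (1 : F)) := by
  ext x
  rw [mem_filter, mem_insert, mem_nthRootsFinset (by omega)]
  rcases eq_or_ne x 0 with rfl | hx
  · simp [zero_pow (by omega : q ≠ 0)]
  · rw [← pow_sub_one_mul (by omega : q ≠ 0)]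
    simp [hx]

lemma card_filter_pow_eq_self (hF : Fintype.card F = q ^ 2) : #{x : F | x ^ q = x} = q := by
  have hq := two_le_of_card_eq_sq hF
  rw [filter_pow_eq_self_eq_insert_nthRootsFinset hq, card_insert_of_notMem,
    card_nthRootsFinset_sub_one hF]
  · omega
  · rw [mem_nthRootsFinset (by omega), zero_pow (by omega)]
    exact zero_ne_one

lemma sum_erase_zero_eq_sum_polar [CharP F 2] (hF : Fintype.card F = q ^ 2) {M : Type*}
    [AddCommMonoid M] (f : F → M) :
    ∑ x ∈ univ.erase 0, f x =
      ∑ u ∈ nthRootsFinset (q + 1) (1 : F), ∑ l ∈ nthRootsFinset (q - 1) (1 : F), f (l * u) := by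
  have hq := two_le_of_card_eq_sq hF
  have mem_sub : ∀ {l : F}, l ∈ nthRootsFinset (q - 1) (1 : F) ↔ l ^ (q - 1) = 1 :=
    mem_nthRootsFinset (by omega) 1
  have mem_add : ∀ {u : F}, u ∈ nthRootsFinset (q + 1) (1 : F) ↔ u ^ (q + 1) = 1 :=
    mem_nthRootsFinset (by omega) 1
  set S := nthRootsFinset (q + 1) (1 : F) ×ˢ nthRootsFinset (q - 1) (1 : F)
  have hmaps : Set.MapsTo (fun p : F × F => p.2 * p.1) S (univ.erase (0 : F) : Finset F) :=
    fun p hp => by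
      obtain ⟨hu, hl⟩ := mem_product.mp hp
      exact mem_erase.mpr ⟨mul_ne_zero (ne_zero_of_mem_nthRootsFinset one_ne_zero hl)
        (ne_zero_of_mem_nthRootsFinset one_ne_zero hu), mem_univ _⟩
  have hinj : Set.InjOn (fun p : F × F => p.2 * p.1) S := by
    rintro ⟨u, l⟩ hp ⟨u', l'⟩ hp' (h : l * u = l' * u')
    obtain ⟨hu, hl⟩ := mem_product.mp hp
    obtain ⟨hu', hl'⟩ := mem_product.mp hp'
    have hu0 := ne_zero_of_mem_nthRootsFinset one_ne_zero hu
    have hl0 := ne_zero_of_mem_nthRootsFinset one_ne_zero hl'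
    have hw : l / l' = u' / u := by
      rw [div_eq_div_iff hl0 hu0, h, mul_comm]
    have hw1 : l / l' = 1 := eq_one_of_pow_sub_one_of_pow_add_one
      (by rw [div_pow, mem_sub.mp hl, mem_sub.mp hl', div_one])
      (by rw [hw, div_pow, mem_add.mp hu, mem_add.mp hu', div_one])
    obtain rfl : l = l' := (div_eq_one_iff_eq hl0).mp hw1
    simp [mul_left_cancel₀ hl0 h]
  have hcard : #(univ.erase (0 : F)) ≤ #S := by
    rw [card_erase_of_mem (mem_univ _), card_univ, hF, card_product, card_nthRootsFinset_add_one hF,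
      card_nthRootsFinset_sub_one hF]
    simpa using (Nat.sq_sub_sq q 1).le
  rw [← sum_product']
  exact (sum_nbij _ hmaps hinj (surjOn_of_injOn_of_card_le _ hmaps hinj hcard) fun _ _ => rfl).symm

end QuadraticExtension

lemma ew_eq_stdAddChar (p : ℕ) [NeZero p] (x : ZMod p) : ew p x = ZMod.stdAddChar x := by
  rw [ew, ZMod.stdAddChar_apply, ZMod.toCircle_apply, ← Complex.exp_nat_mul]
  congr 1
  ring

noncomputable def traceChar (p n : ℕ) [Fact p.Prime] : AddChar (GaloisField p n) ℂ :=
  ZMod.stdAddChar.compAddMonoidHom (Algebra.trace (ZMod p) (GaloisField p n)).toAddMonoidHom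

lemma traceChar_apply (p n : ℕ) [Fact p.Prime] (x : GaloisField p n) :
    traceChar p n x = ew p (Tr p n x) := by
  rw [ew_eq_stdAddChar]
  rfl

lemma traceChar_eq_one_iff (p n : ℕ) [Fact p.Prime] (x : GaloisField p n) :
    traceChar p n x = 1 ↔ Tr p n x = 0 := by
  rw [← (ZMod.stdAddChar (N := p)).map_zero_eq_one, ← ZMod.injective_stdAddChar.eq_iff]
  rfl

section GaloisField

variable (p : ℕ) [Fact p.Prime] {m : ℕ}

lemma algebraMap_Tr_eq_sum_pow_add_pow (hm : m ≠ 0) (z : GaloisField p (2 * m)) :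
    algebraMap (ZMod p) _ (Tr p (2 * m) z) = ∑ i ∈ range m, (z + z ^ p ^ m) ^ p ^ i := by
  rw [Tr, FiniteField.algebraMap_trace_eq_sum_pow, GaloisField.finrank p (by omega), Nat.card_zmod,
    show range (2 * m) = range (m + m) by rw [two_mul], sum_range_add, ← sum_add_distrib]
  refine sum_congr rfl fun i _ => ?_
  rw [add_pow_char_pow, ← pow_mul, ← pow_add]

lemma card_galoisField_two_mul (hm : m ≠ 0) :
    Fintype.card (GaloisField p (2 * m)) = (p ^ m) ^ 2 := by
  rw [← Nat.card_eq_fintype_card, GaloisField.card p _ (by omega), ← pow_mul, mul_comm]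

lemma pow_pow_pow_eq_self (hm : m ≠ 0) (z : GaloisField p (2 * m)) : (z ^ p ^ m) ^ p ^ m = z := by
  rw [← pow_mul, ← sq, ← card_galoisField_two_mul p hm, FiniteField.pow_card]

lemma sum_filter_pow_eq_self_traceChar_mul [DecidableEq (GaloisField p (2 * m))] (hm : m ≠ 0)
    (c : GaloisField p (2 * m)) :
    ∑ x ∈ {x : GaloisField p (2 * m) | x ^ p ^ m = x}, traceChar p (2 * m) (x * c) =
      if c + c ^ p ^ m = 0 then (p ^ m : ℂ) else 0 := by
  set q := p ^ m
  set K : Finset (GaloisField p (2 * m)) := {x | x ^ q = x}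
  have hTr : ∀ x : GaloisField p (2 * m), x ^ q = x →
      algebraMap (ZMod p) _ (Tr p (2 * m) (x * c)) = ∑ i ∈ range m, (x * (c + c ^ q)) ^ p ^ i :=
    fun x hx => by rw [algebraMap_Tr_eq_sum_pow_add_pow p hm, mul_pow, hx, mul_add]
  split_ifs with hc
  · have hone : ∀ x ∈ K, traceChar p (2 * m) (x * c) = 1 := by
      intro x hx
      rw [traceChar_eq_one_iff, ← (algebraMap (ZMod p) (GaloisField p (2 * m))).injective.eq_iff,
        hTr x (mem_filter.mp hx).2, hc]
      simp [(Fact.out : p.Prime).ne_zero]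
    rw [sum_congr rfl hone, sum_const, card_filter_pow_eq_self (card_galoisField_two_mul p hm)]
    simp
  · have : Algebra.IsSeparable (ZMod p) (GaloisField p (2 * m)) := IsGalois.to_isSeparable
    obtain ⟨z, hz⟩ := Algebra.trace_surjective (ZMod p) (GaloisField p (2 * m)) 1
    -- `y (c + c^q) = z + z^q`, so `Tr (y c) = Tr z = 1`
    set y := (z + z ^ q) / (c + c ^ q)
    have hy : y ^ q = y := by
      rw [div_pow, add_pow_char_pow, add_pow_char_pow, pow_pow_pow_eq_self p hm,
        pow_pow_pow_eq_self p hm, add_comm, add_comm (c ^ q)]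
    have hK : ∀ x ∈ K, x + y ∈ K := by
      intro x hx
      rw [mem_filter] at hx ⊢
      exact ⟨mem_univ _, by rw [add_pow_char_pow, hx.2, hy]⟩
    have hyc : traceChar p (2 * m) (c * y) ≠ 1 := by
      rw [Ne, traceChar_eq_one_iff, mul_comm c,
        ← map_eq_zero_iff _ (algebraMap (ZMod p) (GaloisField p (2 * m))).injective, hTr y hy,
        div_mul_cancel₀ _ hc, ← algebraMap_Tr_eq_sum_pow_add_pow p hm, Tr, hz]
      simp
    simpa only [AddChar.mulShift_apply, mul_comm c] using
      AddChar.sum_eq_zero_of_add_mem ((traceChar p (2 * m)).mulShift c) hK hyc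

lemma sum_nthRootsFinset_traceChar_mul [DecidableEq (GaloisField p (2 * m))] (hm : m ≠ 0)
    (c : GaloisField p (2 * m)) :
    ∑ l ∈ nthRootsFinset (p ^ m - 1) (1 : GaloisField p (2 * m)), traceChar p (2 * m) (l * c) =
      (if c + c ^ p ^ m = 0 then (p ^ m : ℂ) else 0) - 1 := by
  have hq := two_le_of_card_eq_sq (card_galoisField_two_mul p hm)
  rw [← sum_filter_pow_eq_self_traceChar_mul p hm c, filter_pow_eq_self_eq_insert_nthRootsFinset hq,
    sum_insert, zero_mul, AddChar.map_zero_eq_one, add_sub_cancel_left]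
  rw [mem_nthRootsFinset (by omega), zero_pow (by omega)]
  exact zero_ne_one

end GaloisField

section NihoExponent

variable {F : Type*} [Field F] {q : ℕ} {u : F}

lemma zpow_add_mul_eq_of_pow_eq_one (hu : u ^ (q + 1) = 1) (j t : ℤ) :
    u ^ (j + (q + 1) * t) = u ^ j := by
  have hu0 : u ≠ 0 := by rintro rfl; simp at hu
  rw [zpow_add₀ hu0, zpow_mul, ← Nat.cast_succ, zpow_natCast, hu, one_zpow, mul_one]

lemma niho_pow_eq_zpow (hq : 1 ≤ q) (hu : u ^ (q + 1) = 1) (s : ℕ) :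
    u ^ (s * (q - 1) + 1) = u ^ (1 - 2 * (s : ℤ)) := by
  rw [← zpow_natCast, ← zpow_add_mul_eq_of_pow_eq_one hu (1 - 2 * s) s]
  congr 1
  push_cast [hq]
  ring

lemma niho_pow_pow_eq_zpow (hq : 1 ≤ q) (hu : u ^ (q + 1) = 1) (s : ℕ) :
    (u ^ (s * (q - 1) + 1)) ^ q = u ^ (2 * (s : ℤ) - 1) := by
  rw [← pow_mul, ← zpow_natCast,
    ← zpow_add_mul_eq_of_pow_eq_one hu (2 * s - 1) (s * q - 2 * s + 1)]
  congr 1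
  push_cast [hq]
  ring

variable [CharP F 2]

lemma niho_add_frobenius_eq_zero_iff (m s : ℕ) (a : F) (hu : u ^ (2 ^ m + 1) = 1) :
    (u ^ (s * (2 ^ m - 1) + 1) + a * u) + (u ^ (s * (2 ^ m - 1) + 1) + a * u) ^ 2 ^ m = 0 ↔
      (u ^ 2) ^ (2 * (s : ℤ) - 1) + a * (u ^ 2) ^ (s : ℤ) + a ^ 2 ^ m * (u ^ 2) ^ ((s : ℤ) - 1)
        + 1 = 0 := by
  have hu0 : u ≠ 0 := by rintro rfl; simp at hu
  have hq : 1 ≤ 2 ^ m := Nat.one_le_two_pow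
  have hinv : u ^ 2 ^ m = u⁻¹ := eq_inv_of_mul_eq_one_right (by rwa [← pow_succ'])
  have key : u ^ (2 * (s : ℤ) - 1) *
      ((u ^ (s * (2 ^ m - 1) + 1) + a * u) + (u ^ (s * (2 ^ m - 1) + 1) + a * u) ^ 2 ^ m) =
      (u ^ 2) ^ (2 * (s : ℤ) - 1) + a * (u ^ 2) ^ (s : ℤ) + a ^ 2 ^ m * (u ^ 2) ^ ((s : ℤ) - 1)
        + 1 := by
    rw [add_pow_char_pow, mul_pow, niho_pow_pow_eq_zpow hq hu, niho_pow_eq_zpow hq hu, hinv]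
    simp only [zpow_sub₀ hu0, zpow_sub₀ (pow_ne_zero 2 hu0), zpow_mul, zpow_natCast, zpow_one]
    field_simp
    ring
  rw [← key, mul_eq_zero, or_iff_right (zpow_ne_zero _ hu0)]

end NihoExponent

lemma card_filter_sq_mem_nthRootsFinset {F : Type*} [Field F] [CharP F 2] [DecidableEq F] {n : ℕ}
    (hn : 0 < n) (P : F → Prop) [DecidablePred P] :
    #{u ∈ nthRootsFinset n (1 : F) | P (u ^ 2)} = #{v ∈ nthRootsFinset n (1 : F) | P v} := by
  have hinj : Function.Injective fun x : F => x ^ 2 := frobenius_inj F 2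
  have himage : (nthRootsFinset n (1 : F)).image (· ^ 2) = nthRootsFinset n (1 : F) := by
    refine eq_of_subset_of_card_le (image_subset_iff.mpr fun u hu => ?_)
      (card_image_of_injective _ hinj).ge
    rw [mem_nthRootsFinset hn] at hu ⊢
    rw [← pow_mul, mul_comm, pow_mul, hu, one_pow]
  conv_rhs => rw [← himage, filter_image, card_image_of_injective _ hinj]

lemma card_filter_niho_eq_natCard {F : Type*} [Field F] [Fintype F] [CharP F 2] [DecidableEq F]
    (m s : ℕ) (a : F) :
    #{u ∈ nthRootsFinset (2 ^ m + 1) (1 : F) |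
        (u ^ (s * (2 ^ m - 1) + 1) + a * u) + (u ^ (s * (2 ^ m - 1) + 1) + a * u) ^ 2 ^ m = 0} =
      Nat.card {x : F // x * x ^ 2 ^ m = 1 ∧
        x ^ (2 * (s : ℤ) - 1) + a * x ^ (s : ℤ) + a ^ 2 ^ m * x ^ ((s : ℤ) - 1) + 1 = 0} := by
  rw [filter_congr fun u hu =>
    niho_add_frobenius_eq_zero_iff m s a ((mem_nthRootsFinset (Nat.succ_pos _) 1).mp hu)]
  refine (card_filter_sq_mem_nthRootsFinset (Nat.succ_pos _) fun v =>
    v ^ (2 * (s : ℤ) - 1) + a * v ^ (s : ℤ) + a ^ 2 ^ m * v ^ ((s : ℤ) - 1) + 1 = 0).trans ?_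
  rw [Nat.card_eq_fintype_card, Fintype.card_subtype, ← filter_filter]
  congr 2
  ext x
  simp [mem_nthRootsFinset, pow_succ']

theorem niho_walsh_unit_circle_general (m : ℕ) (hm : 1 ≤ m) (s : ℕ)
    (d : ℕ) (hd : d = s * (2 ^ m - 1) + 1)
    (a : GaloisField 2 (2 * m)) :
    (∑ x : GaloisField 2 (2 * m), ew 2 (Tr 2 (2 * m) (x ^ d + a * x)))
      = ((Nat.card {x : GaloisField 2 (2 * m) //
            x * x ^ (2 ^ m) = 1 ∧
            x ^ (2 * (s : ℤ) - 1) + a * x ^ (s : ℤ)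
              + a ^ (2 ^ m) * x ^ ((s : ℤ) - 1) + 1 = 0} : ℂ) - 1) * 2 ^ m := by
  classical
  subst hd
  have hF := card_galoisField_two_mul 2 (m := m) (by omega)
  have hq := two_le_of_card_eq_sq hF
  set c : GaloisField 2 (2 * m) → GaloisField 2 (2 * m) :=
    fun u => u ^ (s * (2 ^ m - 1) + 1) + a * u
  have hpolar : ∀ u, ∀ l ∈ nthRootsFinset (2 ^ m - 1) (1 : GaloisField 2 (2 * m)),
      (l * u) ^ (s * (2 ^ m - 1) + 1) + a * (l * u) = l * c u := fun u l hl => by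
    rw [mem_nthRootsFinset (by omega)] at hl
    rw [mul_pow, pow_succ l, pow_mul', hl, one_pow, one_mul, mul_add, mul_left_comm]
  simp_rw [← traceChar_apply]
  rw [← add_sum_erase _ _ (mem_univ 0), sum_erase_zero_eq_sum_polar hF,
    sum_congr rfl fun u _ => sum_congr rfl fun l hl => by rw [hpolar u l hl]]
  simp only [sum_nthRootsFinset_traceChar_mul 2 (by omega : m ≠ 0)]
  rw [zero_pow (by omega), mul_zero, add_zero, AddChar.map_zero_eq_one, sum_sub_distrib,
    ← sum_filter, sum_const, sum_const, card_nthRootsFinset_add_one hF,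
    ← card_filter_niho_eq_natCard m s a]
  push_cast
  ring

/-- Niho's lemma (binary case): for a Niho exponent `d = s(2^m - 1) + 1`,
the Walsh transform `W_d(a)` equals `(N(a) - 1)·2^m`, where `N(a)` counts the
solutions on the unit circle of `x^{2s-1} + a x^s + ā x^{s-1} + 1 = 0`. -/
theorem niho_walsh_unit_circle (m : ℕ) (hm : 1 ≤ m) (s : ℕ)
    (d : ℕ) (hd : d = s * (2 ^ m - 1) + 1)
    (hgcd : Nat.gcd d (2 ^ (2 * m) - 1) = 1)
    (a : GaloisField 2 (2 * m)) (ha : a ≠ 0) :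
    (∑ x : GaloisField 2 (2 * m), ew 2 (Tr 2 (2 * m) (x ^ d + a * x)))
      = ((Nat.card {x : GaloisField 2 (2 * m) //
            x * x ^ (2 ^ m) = 1 ∧
            x ^ (2 * (s : ℤ) - 1) + a * x ^ (s : ℤ)
              + a ^ (2 ^ m) * x ^ ((s : ℤ) - 1) + 1 = 0} : ℂ) - 1) * 2 ^ m :=
  niho_walsh_unit_circle_general m hm s d hd a
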